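/- There is no binary polynomial F of B(T) and elements u, v ∈ U ∪ V ∪ V̄ such that F(0,0) = 0 and F(u,0) = F(0,u) = F(u,u) = v (i.e., B(T) has no join-like binary polynomials on U ∪ V ∪ V̄). -/
import Mathlib


namespace Paper

/-- Direction of a Turing-machine head move. -/
inductive Dir : Type
  | L | R
deriving DecidableEq

/-- A Turing machine with states μ₀, μ₁, …, μ_k (μ₀ the halting state): for each state
μ_i with 1 ≤ i ≤ k and each tape symbol r, exactly one instruction μ_i r s D μ_m,
recorded as `instr i r = (s, D, m)`.  (The value of `instr` at `i = 0` is irrelevant: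
no instruction begins with μ₀.) -/
structure TM (k : ℕ) : Type where
  instr : Fin (k + 1) → Bool → Bool × Dir × Fin (k + 1)

/-- The universe of the algebra B(T):
`zero` = 0, `P j` = P_j, `one`,`two`,`H` the sequential elements U, and the machine
elements `C b i r s` = C_{ir}^s, `D b i r s` = D_{ir}^s, `M b i r` = M_i^r, where
`b = true` marks the barred copy V̄. -/
inductive BT (k : ℕ) : Type
  | zero : BT k
  | P : Fin 3 → BT k
  | one : BT k
  | two : BT k
  | H : BT k
  | C : Bool → Fin (k + 1) → Bool → Bool → BT k
  | D : Bool → Fin (k + 1) → Bool → Bool → BT k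
  | M : Bool → Fin (k + 1) → Bool → BT k
deriving DecidableEq

namespace BT

variable {k : ℕ}

/-- The partial order of B(T): x ≤ y iff x = 0, or x = y, or (x = P₂ and y ∈ {P₀,P₁}). -/
def le (x y : BT k) : Prop :=
  x = zero ∨ x = y ∨ (x = P 2 ∧ (y = P 0 ∨ y = P 1))

/-- x ∧ y: the greatest lower bound for `le`. -/
def meet (x y : BT k) : BT k :=
  if x = y then x
  else if x = P 2 ∧ (y = P 0 ∨ y = P 1) then P 2
  else if y = P 2 ∧ (x = P 0 ∨ x = P 1) then P 2
  else if (x = P 0 ∨ x = P 1) ∧ (y = P 0 ∨ y = P 1) then P 2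
  else zero

/-- membership in P = {P₀,P₁,P₂} -/
def isP : BT k → Bool
  | P _ => true
  | _ => false

/-- membership in U = {1,2,H} -/
def isU : BT k → Bool
  | one => true
  | two => true
  | H => true
  | _ => false

/-- membership in V ∪ V̄ -/
def isVV : BT k → Bool
  | C _ _ _ _ => true
  | D _ _ _ _ => true
  | M _ _ _ => true
  | _ => false

/-- membership in U ∪ V ∪ V̄ -/
def isUVV (x : BT k) : Bool := isU x || isVV x

/-- membership in V₀ = {C_{0r}^s, D_{0r}^s, M₀^r} (unbarred, state μ₀) -/
def isV0 : BT k → Bool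
  | C false i _ _ => i == 0
  | D false i _ _ => i == 0
  | M false i _ => i == 0
  | _ => false

/-- membership in V₁₀⁰ = {C₁₀⁰, M₁⁰, D₁₀⁰} -/
def isV10 (x : BT k) : Bool :=
  x == C false 1 false false || x == M false 1 false || x == D false 1 false false

/-- the bar involution on V ∪ V̄ (identity elsewhere) -/
def barOp : BT k → BT k
  | C b i r s => C (!b) i r s
  | D b i r s => D (!b) i r s
  | M b i r => M (!b) i r
  | x => x

/-- s₀ = C₁₀⁰, s₁ = M₁⁰, s₂ = D₁₀⁰ -/
def sel : Fin 3 → BT k := ![C false 1 false false, M false 1 false, D false 1 false false]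

/-- x ∧ⁱ y = x if x = y ∈ (P ∪ V₁₀⁰) \ {s_i}, else 0. -/
def meetI (i : Fin 3) (x y : BT k) : BT k :=
  if x = y ∧ (isP x ∨ isV10 x) ∧ x ≠ sel i then x else zero

/-- T₀(x) = P₂ if x ∈ {P₀,P₂}; P₀ if x = P₁; x if x ∈ V₀; else 0. -/
def T0 : BT k → BT k
  | P j => if j = 1 then P 0 else P 2
  | C false i r s => if i = 0 then C false i r s else zero
  | D false i r s => if i = 0 then D false i r s else zero
  | M false i r => if i = 0 then M false i r else zero
  | _ => zero

/-- T₁(x,y). -/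
def T1 (x y : BT k) : BT k :=
  if (x = P 0 ∧ y = P 0) ∨ (x = P 0 ∧ y = P 1) ∨ (x = P 1 ∧ y = P 0) ∨
     (x = P 0 ∧ y = P 2) ∨ (x = P 2 ∧ y = P 0) then P 1
  else if (x = P 1 ∨ x = P 2) ∧ (y = P 1 ∨ y = P 2) then P 2
  else if x = y ∧ isV10 x then x
  else zero

/-- J′(x,y,z) = x ∧ z if x = y or {x,y} ⊆ P; x if x = ȳ ∈ V ∪ V̄; else 0. -/
def J' (x y z : BT k) : BT k :=
  if x = y ∨ (isP x ∧ isP y) then meet x z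
  else if isVV y ∧ x = barOp y then x
  else zero

/-- the ternary discriminator: t(x,y,z) = z if x = y, else x. -/
def disc (x y z : BT k) : BT k := if x = y then z else x

/-- S₁(u,x,y,z). -/
def S1 (u x y z : BT k) : BT k :=
  if (u = one ∨ u = two) ∧ x = y ∧ y = z ∧ isUVV x then x
  else if isP x ∧ isP y ∧ isP z then disc x y z
  else zero

/-- S₂(u,v,x,y,z). -/
def S2 (u v x y z : BT k) : BT k :=
  if isVV v ∧ u = barOp v ∧ x = y ∧ y = z ∧ isVV x then x
  else if isP x ∧ isP y ∧ isP z then disc x y z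
  else zero

/-- L_{irt} for the instruction μ_i r s L μ_m (the barred clause is handled by carrying
the bar `b` of the argument through). -/
def Lop (i : Fin (k + 1)) (r s : Bool) (m : Fin (k + 1)) (t : Bool) :
    BT k → BT k → BT k → BT k := fun x y u =>
  match u with
  | P j => if x = one ∧ y = one then P j else zero
  | C b i' r' s' =>
      if x = one ∧ y = one ∧ i' = i ∧ r' = r then C b m t s'
      else if x = H ∧ y = one ∧ i' = i ∧ r' = r ∧ s' = t then M b m t
      else zero
  | M b i' r' => if x = two ∧ y = H ∧ i' = i ∧ r' = r then D b m t s else zero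
  | D b i' r' s' => if x = two ∧ y = two ∧ i' = i ∧ r' = r then D b m t s' else zero
  | _ => zero

/-- R_{irt} for the instruction μ_i r s R μ_m. -/
def Rop (i : Fin (k + 1)) (r s : Bool) (m : Fin (k + 1)) (t : Bool) :
    BT k → BT k → BT k → BT k := fun x y u =>
  match u with
  | P j => if x = one ∧ y = one then P j else zero
  | C b i' r' s' => if x = one ∧ y = one ∧ i' = i ∧ r' = r then C b m t s' else zero
  | M b i' r' => if x = H ∧ y = one ∧ i' = i ∧ r' = r then C b m t s else zero
  | D b i' r' s' =>
      if x = two ∧ y = H ∧ i' = i ∧ r' = r ∧ s' = t then M b m t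
      else if x = two ∧ y = two ∧ i' = i ∧ r' = r then D b m t s'
      else zero
  | _ => zero

end BT

/-- The forward machine operation determined by the unique instruction of T beginning
with μ_i r (for 1 ≤ i ≤ k) and the symbol t. -/
def fwd {k : ℕ} (T : TM k) (i : Fin (k + 1)) (r t : Bool) :
    BT k → BT k → BT k → BT k :=
  match T.instr i r with
  | (s, Dir.L, m) => BT.Lop i r s m t
  | (s, Dir.R, m) => BT.Rop i r s m t

/-- the reverse of a machine operation: F°(x,y,u) = v when F(x,y,v) = u ≠ 0, else 0. -/
noncomputable def revOp {k : ℕ} (F : BT k → BT k → BT k → BT k) (x y u : BT k) : BT k :=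
  haveI := Classical.propDecidable (u ≠ BT.zero ∧ ∃ v, F x y v = u)
  if h : u ≠ BT.zero ∧ ∃ v, F x y v = u then h.2.choose else BT.zero

/-- The machine operations ℳ: `b = false` gives the forward operation, `b = true` the
reverse operation. -/
noncomputable def mop {k : ℕ} (T : TM k) (i : Fin (k + 1)) (r t : Bool) (b : Bool) :
    BT k → BT k → BT k → BT k :=
  match b with
  | false => fwd T i r t
  | true => revOp (fwd T i r t)

/-- The relation ≺ on U: 2≺2, 2≺H, H≺1, 1≺1. -/
def prec {k : ℕ} : BT k → BT k → Bool
  | BT.two, BT.two => true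
  | BT.two, BT.H => true
  | BT.H, BT.one => true
  | BT.one, BT.one => true
  | _, _ => false

/-- U_i¹ built from the machine operation F. -/
def U1op {k : ℕ} (F : BT k → BT k → BT k → BT k) (x y z u : BT k) : BT k :=
  if prec x y ∧ prec x z ∧ y ≠ z ∧ BT.isVV (F x y u) then BT.barOp (F x y u)
  else if prec x y ∧ y = z then F x y u
  else BT.zero

/-- U_i² built from the machine operation F. -/
def U2op {k : ℕ} (F : BT k → BT k → BT k → BT k) (x y z u : BT k) : BT k :=
  if prec x z ∧ prec y z ∧ x ≠ y ∧ BT.isVV (F y z u) then BT.barOp (F y z u)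
  else if x = y ∧ prec y z then F y z u
  else BT.zero

/-- The n-ary polynomials of the algebra B(T): functions obtained by composing the basic
operations (the constant 0, T₀, T₁, ∧, ∧⁰, ∧¹, ∧², J′, S₁, S₂, the forward and reverse
machine operations, and the U_i¹, U_i²), coordinate projections and constants. -/
inductive PolyB {k : ℕ} (T : TM k) : {n : ℕ} → ((Fin n → BT k) → BT k) → Prop where
  | proj {n : ℕ} (i : Fin n) : PolyB T fun v => v i
  | const {n : ℕ} (c : BT k) : PolyB T fun _ : Fin n → BT k => c
  | t0 {n : ℕ} {p : (Fin n → BT k) → BT k} :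
      PolyB T p → PolyB T fun v => BT.T0 (p v)
  | t1 {n : ℕ} {p q : (Fin n → BT k) → BT k} :
      PolyB T p → PolyB T q → PolyB T fun v => BT.T1 (p v) (q v)
  | meet {n : ℕ} {p q : (Fin n → BT k) → BT k} :
      PolyB T p → PolyB T q → PolyB T fun v => BT.meet (p v) (q v)
  | meetI (j : Fin 3) {n : ℕ} {p q : (Fin n → BT k) → BT k} :
      PolyB T p → PolyB T q → PolyB T fun v => BT.meetI j (p v) (q v)
  | jop {n : ℕ} {p q r : (Fin n → BT k) → BT k} :
      PolyB T p → PolyB T q → PolyB T r → PolyB T fun v => BT.J' (p v) (q v) (r v)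
  | s1 {n : ℕ} {p q r s : (Fin n → BT k) → BT k} :
      PolyB T p → PolyB T q → PolyB T r → PolyB T s →
      PolyB T fun v => BT.S1 (p v) (q v) (r v) (s v)
  | s2 {n : ℕ} {p q r s w : (Fin n → BT k) → BT k} :
      PolyB T p → PolyB T q → PolyB T r → PolyB T s → PolyB T w →
      PolyB T fun v => BT.S2 (p v) (q v) (r v) (s v) (w v)
  | mach (i : Fin (k + 1)) (hi : i ≠ 0) (r t b : Bool) {n : ℕ}
      {p q u : (Fin n → BT k) → BT k} :
      PolyB T p → PolyB T q → PolyB T u →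
      PolyB T fun v => mop T i r t b (p v) (q v) (u v)
  | u1 (i : Fin (k + 1)) (hi : i ≠ 0) (r t b : Bool) {n : ℕ}
      {p q r' s : (Fin n → BT k) → BT k} :
      PolyB T p → PolyB T q → PolyB T r' → PolyB T s →
      PolyB T fun v => U1op (mop T i r t b) (p v) (q v) (r' v) (s v)
  | u2 (i : Fin (k + 1)) (hi : i ≠ 0) (r t b : Bool) {n : ℕ}
      {p q r' s : (Fin n → BT k) → BT k} :
      PolyB T p → PolyB T q → PolyB T r' → PolyB T s →
      PolyB T fun v => U2op (mop T i r t b) (p v) (q v) (r' v) (s v)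

/-- unary polynomials of B(T) -/
def UPolyB {k : ℕ} (T : TM k) (F : BT k → BT k) : Prop :=
  PolyB T (n := 1) fun v => F (v 0)

/-- binary polynomials of B(T) -/
def BPolyB {k : ℕ} (T : TM k) (F : BT k → BT k → BT k) : Prop :=
  PolyB T (n := 2) fun v => F (v 0) (v 1)


section NoJoin
variable {k : ℕ}

/-- y equals x or zero -/
def ZS (y x : BT k) : Prop := y = x ∨ y = BT.zero

def pp (x y : BT k) : BT k := if x = y then x else BT.zero

def Good (a b c d : BT k) : Prop := ZS b d ∧ ZS c d ∧ a = pp b c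

lemma pp_self (x : BT k) : pp x x = x := if_pos rfl

lemma pp_zero_left (x : BT k) : pp BT.zero x = BT.zero := by
  unfold pp; split <;> rfl

lemma pp_zero_right (x : BT k) : pp x BT.zero = BT.zero := by
  unfold pp; split
  · assumption
  · rfl

lemma pp_ZS_left {y x : BT k} (h : ZS y x) : pp y x = y := by
  rcases h with rfl | rfl
  · exact pp_self _
  · exact pp_zero_left _

lemma pp_ZS_right {z x : BT k} (h : ZS z x) : pp x z = z := by
  rcases h with rfl | rfl
  · exact pp_self _
  · exact pp_zero_right _

lemma good_const (c : BT k) : Good c c c c :=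
  ⟨Or.inl rfl, Or.inl rfl, (pp_self c).symm⟩

lemma closG {ι : Type} (f : (ι → BT k) → BT k)
    (hQ : ∀ x y : ι → BT k, (∀ i, ZS (y i) (x i)) → f y = BT.zero ∨ f y = f x)
    (hR : ∀ x y z : ι → BT k, (∀ i, ZS (y i) (x i)) → (∀ i, ZS (z i) (x i)) →
        f y ≠ BT.zero → f z ≠ BT.zero → f (fun i => pp (y i) (z i)) ≠ BT.zero)
    {A B C D : ι → BT k} (h : ∀ i, Good (A i) (B i) (C i) (D i)) :
    Good (f A) (f B) (f C) (f D) := by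
  have hBD : ∀ i, ZS (B i) (D i) := fun i => (h i).1
  have hCD : ∀ i, ZS (C i) (D i) := fun i => (h i).2.1
  have hA : A = fun i => pp (B i) (C i) := funext fun i => (h i).2.2
  have hAB : ∀ i, ZS (A i) (B i) := by
    intro i
    rw [(h i).2.2]
    by_cases hbc : B i = C i
    · exact Or.inl (by rw [pp, if_pos hbc])
    · exact Or.inr (by rw [pp, if_neg hbc])
  have hAC : ∀ i, ZS (A i) (C i) := by
    intro i
    rw [(h i).2.2]
    by_cases hbc : B i = C i
    · exact Or.inl (by rw [pp, if_pos hbc]; exact hbc)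
    · exact Or.inr (by rw [pp, if_neg hbc])
  refine ⟨(hQ D B hBD).symm, (hQ D C hCD).symm, ?_⟩
  by_cases hbc : f B = f C
  · by_cases hb0 : f B = BT.zero
    · have h1 : f A = BT.zero := by
        rcases hQ B A hAB with h' | h'
        · exact h'
        · rw [h', hb0]
      rw [h1, pp, if_pos hbc, hb0]
    · have hc0 : f C ≠ BT.zero := fun hh => hb0 (hbc.trans hh)
      have hw : f (fun i => pp (B i) (C i)) ≠ BT.zero := hR D B C hBD hCD hb0 hc0
      rw [← hA] at hw
      rcases hQ B A hAB with h' | h'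
      · exact absurd h' hw
      · rw [h', pp, if_pos hbc]
  · have h1 : f A = BT.zero := by
      by_contra hA0
      have e1 : f A = f B := (hQ B A hAB).resolve_left hA0
      have e2 : f A = f C := (hQ C A hAC).resolve_left hA0
      exact hbc (e1 ▸ e2)
    rw [h1, pp, if_neg hbc]

lemma fullQ {ι : Type} (f : (ι → BT k) → BT k)
    (hf : ∀ y, f y ≠ BT.zero → ∀ i, y i ≠ BT.zero) :
    ∀ x y : ι → BT k, (∀ i, ZS (y i) (x i)) → f y = BT.zero ∨ f y = f x := by
  intro x y h
  by_cases h0 : f y = BT.zero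
  · exact Or.inl h0
  · right
    have : y = x := funext fun i => (h i).resolve_right (hf y h0 i)
    rw [this]

lemma fullR {ι : Type} (f : (ι → BT k) → BT k)
    (hf : ∀ y, f y ≠ BT.zero → ∀ i, y i ≠ BT.zero) :
    ∀ x y z : ι → BT k, (∀ i, ZS (y i) (x i)) → (∀ i, ZS (z i) (x i)) →
        f y ≠ BT.zero → f z ≠ BT.zero → f (fun i => pp (y i) (z i)) ≠ BT.zero := by
  intro x y z hy hz h1 h2
  have ey : y = x := funext fun i => (hy i).resolve_right (hf y h1 i)
  have ez : z = x := funext fun i => (hz i).resolve_right (hf z h2 i)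
  have : (fun i => pp (y i) (z i)) = y := by
    funext i; rw [ey, ez, pp_self]
  rw [this]; exact h1


lemma isP_nz {x : BT k} (h : BT.isP x = true) : x ≠ BT.zero := by
  rintro rfl; simp [BT.isP] at h

lemma isVV_nz {x : BT k} (h : BT.isVV x = true) : x ≠ BT.zero := by
  rintro rfl; simp [BT.isVV] at h

lemma isUVV_nz {x : BT k} (h : BT.isUVV x = true) : x ≠ BT.zero := by
  rintro rfl; simp [BT.isUVV, BT.isU, BT.isVV] at h

lemma isP_isUVV {x : BT k} (h : BT.isP x = true) : BT.isUVV x = false := by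
  cases x <;> simp [BT.isP, BT.isUVV, BT.isU, BT.isVV] at h ⊢

lemma barOp_nz {x : BT k} (h : BT.isVV x = true) : BT.barOp x ≠ BT.zero := by
  cases x <;> simp [BT.isVV, BT.barOp] at h ⊢

lemma meet_zero_left (y : BT k) : BT.meet BT.zero y = BT.zero := by
  unfold BT.meet; split_ifs <;> simp_all

lemma meet_zero_right (x : BT k) : BT.meet x BT.zero = BT.zero := by
  unfold BT.meet; split_ifs <;> simp_all

lemma meet_nz {x y : BT k} (h : BT.meet x y ≠ BT.zero) : x ≠ BT.zero ∧ y ≠ BT.zero := by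
  constructor <;> rintro rfl
  · exact h (meet_zero_left y)
  · exact h (meet_zero_right x)

lemma T0_nz {x : BT k} (h : BT.T0 x ≠ BT.zero) : x ≠ BT.zero := by
  rintro rfl; exact h rfl

lemma T1_zero_left (y : BT k) : BT.T1 BT.zero y = BT.zero := by
  unfold BT.T1; split_ifs <;> simp_all [BT.isV10]

lemma T1_zero_right (x : BT k) : BT.T1 x BT.zero = BT.zero := by
  unfold BT.T1; split_ifs with h1 h2 h3 <;> simp_all [BT.isV10]

lemma T1_nz {x y : BT k} (h : BT.T1 x y ≠ BT.zero) : x ≠ BT.zero ∧ y ≠ BT.zero := by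
  constructor <;> rintro rfl
  · exact h (T1_zero_left y)
  · exact h (T1_zero_right x)

lemma meetI_zero_left (j : Fin 3) (y : BT k) : BT.meetI j BT.zero y = BT.zero := by
  unfold BT.meetI; split <;> rfl

lemma meetI_zero_right (j : Fin 3) (x : BT k) : BT.meetI j x BT.zero = BT.zero := by
  unfold BT.meetI; split_ifs with h
  · exact h.1
  · rfl

lemma meetI_nz {j : Fin 3} {x y : BT k} (h : BT.meetI j x y ≠ BT.zero) :
    x ≠ BT.zero ∧ y ≠ BT.zero := by
  constructor <;> rintro rfl
  · exact h (meetI_zero_left j y)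
  · exact h (meetI_zero_right j x)

lemma Lop_zero₁ (i : Fin (k+1)) (r s : Bool) (m : Fin (k+1)) (t : Bool) (y u : BT k) :
    BT.Lop i r s m t BT.zero y u = BT.zero := by
  cases u <;> simp [BT.Lop]

lemma Lop_zero₂ (i : Fin (k+1)) (r s : Bool) (m : Fin (k+1)) (t : Bool) (x u : BT k) :
    BT.Lop i r s m t x BT.zero u = BT.zero := by
  cases u <;> simp [BT.Lop]

lemma Lop_zero₃ (i : Fin (k+1)) (r s : Bool) (m : Fin (k+1)) (t : Bool) (x y : BT k) :
    BT.Lop i r s m t x y BT.zero = BT.zero := rfl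

lemma Rop_zero₁ (i : Fin (k+1)) (r s : Bool) (m : Fin (k+1)) (t : Bool) (y u : BT k) :
    BT.Rop i r s m t BT.zero y u = BT.zero := by
  cases u <;> simp [BT.Rop]

lemma Rop_zero₂ (i : Fin (k+1)) (r s : Bool) (m : Fin (k+1)) (t : Bool) (x u : BT k) :
    BT.Rop i r s m t x BT.zero u = BT.zero := by
  cases u <;> simp [BT.Rop]

lemma Rop_zero₃ (i : Fin (k+1)) (r s : Bool) (m : Fin (k+1)) (t : Bool) (x y : BT k) :
    BT.Rop i r s m t x y BT.zero = BT.zero := rfl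

lemma Lop_nz {i : Fin (k+1)} {r s : Bool} {m : Fin (k+1)} {t : Bool} {x y u : BT k}
    (h : BT.Lop i r s m t x y u ≠ BT.zero) :
    x ≠ BT.zero ∧ y ≠ BT.zero ∧ u ≠ BT.zero := by
  refine ⟨?_, ?_, ?_⟩ <;> rintro rfl
  · exact h (Lop_zero₁ ..)
  · exact h (Lop_zero₂ ..)
  · exact h (Lop_zero₃ ..)

lemma Rop_nz {i : Fin (k+1)} {r s : Bool} {m : Fin (k+1)} {t : Bool} {x y u : BT k}
    (h : BT.Rop i r s m t x y u ≠ BT.zero) :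
    x ≠ BT.zero ∧ y ≠ BT.zero ∧ u ≠ BT.zero := by
  refine ⟨?_, ?_, ?_⟩ <;> rintro rfl
  · exact h (Rop_zero₁ ..)
  · exact h (Rop_zero₂ ..)
  · exact h (Rop_zero₃ ..)

lemma fwd_nz {T : TM k} {i : Fin (k+1)} {r t : Bool} {x y u : BT k}
    (h : fwd T i r t x y u ≠ BT.zero) :
    x ≠ BT.zero ∧ y ≠ BT.zero ∧ u ≠ BT.zero := by
  unfold fwd at h
  rcases hins : T.instr i r with ⟨s, d, m⟩
  rw [hins] at h
  cases d
  · exact Lop_nz h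
  · exact Rop_nz h

lemma revOp_nz {F : BT k → BT k → BT k → BT k}
    (hF : ∀ x y u, F x y u ≠ BT.zero → x ≠ BT.zero ∧ y ≠ BT.zero ∧ u ≠ BT.zero)
    {x y u : BT k} (h : revOp F x y u ≠ BT.zero) :
    x ≠ BT.zero ∧ y ≠ BT.zero ∧ u ≠ BT.zero := by
  by_cases hc : u ≠ BT.zero ∧ ∃ v, F x y v = u
  · obtain ⟨hu, v, hv⟩ := hc
    have := hF x y v (by rw [hv]; exact hu)
    exact ⟨this.1, this.2.1, hu⟩
  · exfalso; apply h; unfold revOp; exact dif_neg hc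

lemma mop_nz {T : TM k} {i : Fin (k+1)} {r t b : Bool} {x y u : BT k}
    (h : mop T i r t b x y u ≠ BT.zero) :
    x ≠ BT.zero ∧ y ≠ BT.zero ∧ u ≠ BT.zero := by
  cases b
  · exact fwd_nz h
  · exact revOp_nz (fun _ _ _ h' => fwd_nz h') h

lemma prec_nz {x y : BT k} (h : prec x y = true) : x ≠ BT.zero ∧ y ≠ BT.zero := by
  constructor <;> rintro rfl
  · cases y <;> simp [prec] at h
  · cases x <;> simp [prec] at h

lemma U1_nz {F : BT k → BT k → BT k → BT k}
    (hF : ∀ x y u, F x y u ≠ BT.zero → x ≠ BT.zero ∧ y ≠ BT.zero ∧ u ≠ BT.zero)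
    {x y z u : BT k} (h : U1op F x y z u ≠ BT.zero) :
    x ≠ BT.zero ∧ y ≠ BT.zero ∧ z ≠ BT.zero ∧ u ≠ BT.zero := by
  unfold U1op at h
  split_ifs at h with h1 h2
  · obtain ⟨hxy, hxz, hyz, hvv⟩ := h1
    have hFnz : F x y u ≠ BT.zero := isVV_nz hvv ∘ fun e => e ▸ rfl
    obtain ⟨hx, hy, hu⟩ := hF x y u (fun e => isVV_nz hvv (by rw [← e]))
    exact ⟨hx, hy, (prec_nz hxz).2, hu⟩
  · obtain ⟨hxy, hyz⟩ := h2
    obtain ⟨hx, hy, hu⟩ := hF x y u h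
    exact ⟨hx, hy, hyz ▸ hy, hu⟩
  · exact absurd rfl h

lemma U2_nz {F : BT k → BT k → BT k → BT k}
    (hF : ∀ x y u, F x y u ≠ BT.zero → x ≠ BT.zero ∧ y ≠ BT.zero ∧ u ≠ BT.zero)
    {x y z u : BT k} (h : U2op F x y z u ≠ BT.zero) :
    x ≠ BT.zero ∧ y ≠ BT.zero ∧ z ≠ BT.zero ∧ u ≠ BT.zero := by
  unfold U2op at h
  split_ifs at h with h1 h2
  · obtain ⟨hxz, hyz, hxy, hvv⟩ := h1
    obtain ⟨hy, hz, hu⟩ := hF y z u (fun e => isVV_nz hvv (by rw [← e]))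
    exact ⟨(prec_nz hxz).1, hy, hz, hu⟩
  · obtain ⟨hxy, hyz⟩ := h2
    obtain ⟨hy, hz, hu⟩ := hF y z u h
    exact ⟨hxy ▸ hy, hy, hz, hu⟩
  · exact absurd rfl h


-- equational lemmas for J'
lemma J'_eq₁ {x y z : BT k} (h : x = y ∨ (BT.isP x = true ∧ BT.isP y = true)) :
    BT.J' x y z = BT.meet x z := by
  unfold BT.J'; rw [if_pos h]

lemma J'_eq₂ {x y z : BT k} (h1 : ¬(x = y ∨ (BT.isP x = true ∧ BT.isP y = true)))
    (h2 : BT.isVV y = true ∧ x = BT.barOp y) :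
    BT.J' x y z = x := by
  unfold BT.J'; rw [if_neg h1, if_pos h2]

lemma J'_eq₃ {x y z : BT k} (h1 : ¬(x = y ∨ (BT.isP x = true ∧ BT.isP y = true)))
    (h2 : ¬(BT.isVV y = true ∧ x = BT.barOp y)) :
    BT.J' x y z = BT.zero := by
  unfold BT.J'; rw [if_neg h1, if_neg h2]

lemma J'_Q {a b c a' b' c' : BT k} (ha : ZS a' a) (hb : ZS b' b) (hc : ZS c' c) :
    BT.J' a' b' c' = BT.zero ∨ BT.J' a' b' c' = BT.J' a b c := by
  by_cases hA : a' = b' ∨ (BT.isP a' = true ∧ BT.isP b' = true)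
  · rw [J'_eq₁ hA]
    by_cases h0 : BT.meet a' c' = BT.zero
    · exact Or.inl h0
    right
    obtain ⟨ha0, hc0⟩ := meet_nz h0
    have hb0 : b' ≠ BT.zero := by
      rcases hA with h | h
      · rw [← h]; exact ha0
      · exact isP_nz h.2
    obtain rfl := ha.resolve_right ha0
    obtain rfl := hb.resolve_right hb0
    obtain rfl := hc.resolve_right hc0
    rw [J'_eq₁ hA]
  · by_cases hB : BT.isVV b' = true ∧ a' = BT.barOp b'
    · rw [J'_eq₂ hA hB]
      by_cases h0 : a' = BT.zero
      · exact Or.inl h0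
      right
      obtain rfl := ha.resolve_right h0
      obtain rfl := hb.resolve_right (isVV_nz hB.1)
      rw [J'_eq₂ hA hB]
    · exact Or.inl (J'_eq₃ hA hB)

lemma J'_R {a b c a₁ b₁ c₁ a₂ b₂ c₂ : BT k}
    (ha₁ : ZS a₁ a) (hb₁ : ZS b₁ b) (hc₁ : ZS c₁ c)
    (ha₂ : ZS a₂ a) (hb₂ : ZS b₂ b) (hc₂ : ZS c₂ c)
    (h1 : BT.J' a₁ b₁ c₁ ≠ BT.zero) (h2 : BT.J' a₂ b₂ c₂ ≠ BT.zero) :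
    BT.J' (pp a₁ a₂) (pp b₁ b₂) (pp c₁ c₂) ≠ BT.zero := by
  by_cases hA : a₁ = b₁ ∨ (BT.isP a₁ = true ∧ BT.isP b₁ = true)
  · rw [J'_eq₁ hA] at h1
    obtain ⟨ha0, hc0⟩ := meet_nz h1
    have hb0 : b₁ ≠ BT.zero := by
      rcases hA with h | h
      · rw [← h]; exact ha0
      · exact isP_nz h.2
    obtain rfl := ha₁.resolve_right ha0
    obtain rfl := hb₁.resolve_right hb0
    obtain rfl := hc₁.resolve_right hc0
    rw [pp_ZS_right ha₂, pp_ZS_right hb₂, pp_ZS_right hc₂]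
    exact h2
  · by_cases hB : BT.isVV b₁ = true ∧ a₁ = BT.barOp b₁
    · rw [J'_eq₂ hA hB] at h1
      obtain rfl := ha₁.resolve_right h1
      obtain rfl := hb₁.resolve_right (isVV_nz hB.1)
      by_cases hA2 : a₂ = b₂ ∨ (BT.isP a₂ = true ∧ BT.isP b₂ = true)
      · rw [J'_eq₁ hA2] at h2
        obtain ⟨ha20, hc20⟩ := meet_nz h2
        have hb20 : b₂ ≠ BT.zero := by
          rcases hA2 with h | h
          · rw [← h]; exact ha20
          · exact isP_nz h.2
        obtain rfl := ha₂.resolve_right ha20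
        obtain rfl := hb₂.resolve_right hb20
        exact absurd hA2 hA
      · by_cases hB2 : BT.isVV b₂ = true ∧ a₂ = BT.barOp b₂
        · rw [J'_eq₂ hA2 hB2] at h2
          obtain rfl := ha₂.resolve_right h2
          obtain rfl := hb₂.resolve_right (isVV_nz hB2.1)
          rw [pp_self, pp_self, J'_eq₂ hA hB]
          exact h1
        · exact absurd (J'_eq₃ hA2 hB2) h2
    · exact absurd (J'_eq₃ hA hB) h1


lemma disc_nz {x y z : BT k} (hx : BT.isP x = true) (hz : BT.isP z = true) :
    BT.disc x y z ≠ BT.zero := by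
  unfold BT.disc; split
  · exact isP_nz hz
  · exact isP_nz hx

-- S1 equational lemmas
lemma S1_eq₁ {u x y z : BT k}
    (h : (u = BT.one ∨ u = BT.two) ∧ x = y ∧ y = z ∧ BT.isUVV x = true) :
    BT.S1 u x y z = x := by
  unfold BT.S1; rw [if_pos h]

lemma S1_notc1 {u x y z : BT k} (hx : BT.isP x = true) :
    ¬((u = BT.one ∨ u = BT.two) ∧ x = y ∧ y = z ∧ BT.isUVV x = true) := by
  intro h
  rw [isP_isUVV hx] at h
  exact Bool.false_ne_true h.2.2.2

lemma S1_eq₂ {u x y z : BT k}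
    (h1 : ¬((u = BT.one ∨ u = BT.two) ∧ x = y ∧ y = z ∧ BT.isUVV x = true))
    (h2 : BT.isP x = true ∧ BT.isP y = true ∧ BT.isP z = true) :
    BT.S1 u x y z = BT.disc x y z := by
  unfold BT.S1; rw [if_neg h1, if_pos h2]

lemma S1_eq₃ {u x y z : BT k}
    (h1 : ¬((u = BT.one ∨ u = BT.two) ∧ x = y ∧ y = z ∧ BT.isUVV x = true))
    (h2 : ¬(BT.isP x = true ∧ BT.isP y = true ∧ BT.isP z = true)) :
    BT.S1 u x y z = BT.zero := by
  unfold BT.S1; rw [if_neg h1, if_neg h2]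

lemma S1_Q {u x y z u' x' y' z' : BT k}
    (hu : ZS u' u) (hx : ZS x' x) (hy : ZS y' y) (hz : ZS z' z) :
    BT.S1 u' x' y' z' = BT.zero ∨ BT.S1 u' x' y' z' = BT.S1 u x y z := by
  by_cases hc1 : (u' = BT.one ∨ u' = BT.two) ∧ x' = y' ∧ y' = z' ∧ BT.isUVV x' = true
  · right
    obtain ⟨hu1, hxy, hyz, hUVV⟩ := hc1
    have hx0 : x' ≠ BT.zero := isUVV_nz hUVV
    have hu0 : u' ≠ BT.zero := by rcases hu1 with rfl | rfl <;> simp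
    obtain rfl := hx.resolve_right hx0
    obtain rfl := hy.resolve_right (by rw [← hxy]; exact hx0)
    obtain rfl := hz.resolve_right (by rw [← hyz, ← hxy]; exact hx0)
    obtain rfl := hu.resolve_right hu0
    rfl
  · by_cases hc2 : BT.isP x' = true ∧ BT.isP y' = true ∧ BT.isP z' = true
    · right
      obtain ⟨hpx, hpy, hpz⟩ := hc2
      obtain rfl := hx.resolve_right (isP_nz hpx)
      obtain rfl := hy.resolve_right (isP_nz hpy)
      obtain rfl := hz.resolve_right (isP_nz hpz)
      rw [S1_eq₂ (S1_notc1 hpx) ⟨hpx, hpy, hpz⟩, S1_eq₂ (S1_notc1 hpx) ⟨hpx, hpy, hpz⟩]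
    · exact Or.inl (S1_eq₃ hc1 hc2)

lemma S1_nzXYZ {x y z u' x' y' z' : BT k}
    (hx : ZS x' x) (hy : ZS y' y) (hz : ZS z' z)
    (h : BT.S1 u' x' y' z' ≠ BT.zero) : x' = x ∧ y' = y ∧ z' = z := by
  by_cases hc1 : (u' = BT.one ∨ u' = BT.two) ∧ x' = y' ∧ y' = z' ∧ BT.isUVV x' = true
  · obtain ⟨hu1, hxy, hyz, hUVV⟩ := hc1
    have hx0 : x' ≠ BT.zero := isUVV_nz hUVV
    exact ⟨hx.resolve_right hx0, hy.resolve_right (by rw [← hxy]; exact hx0),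
      hz.resolve_right (by rw [← hyz, ← hxy]; exact hx0)⟩
  · by_cases hc2 : BT.isP x' = true ∧ BT.isP y' = true ∧ BT.isP z' = true
    · exact ⟨hx.resolve_right (isP_nz hc2.1), hy.resolve_right (isP_nz hc2.2.1),
        hz.resolve_right (isP_nz hc2.2.2)⟩
    · exact absurd (S1_eq₃ hc1 hc2) h

lemma S1_R {u x y z u₁ x₁ y₁ z₁ u₂ x₂ y₂ z₂ : BT k}
    (hu₁ : ZS u₁ u) (hx₁ : ZS x₁ x) (hy₁ : ZS y₁ y) (hz₁ : ZS z₁ z)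
    (hu₂ : ZS u₂ u) (hx₂ : ZS x₂ x) (hy₂ : ZS y₂ y) (hz₂ : ZS z₂ z)
    (h1 : BT.S1 u₁ x₁ y₁ z₁ ≠ BT.zero) (h2 : BT.S1 u₂ x₂ y₂ z₂ ≠ BT.zero) :
    BT.S1 (pp u₁ u₂) (pp x₁ x₂) (pp y₁ y₂) (pp z₁ z₂) ≠ BT.zero := by
  obtain ⟨rfl, rfl, rfl⟩ := S1_nzXYZ hx₁ hy₁ hz₁ h1
  obtain ⟨rfl, rfl, rfl⟩ := S1_nzXYZ hx₂ hy₂ hz₂ h2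
  rw [pp_self, pp_self, pp_self]
  by_cases hc1 : (u₁ = BT.one ∨ u₁ = BT.two) ∧ x₂ = y₂ ∧ y₂ = z₂ ∧ BT.isUVV x₂ = true
  · have hu0 : u₁ ≠ BT.zero := by rcases hc1.1 with rfl | rfl <;> simp
    obtain rfl := hu₁.resolve_right hu0
    rw [pp_ZS_right hu₂]
    exact h2
  · by_cases hc2 : BT.isP x₂ = true ∧ BT.isP y₂ = true ∧ BT.isP z₂ = true
    · rw [S1_eq₂ (S1_notc1 hc2.1) hc2]
      exact disc_nz hc2.1 hc2.2.2
    · exact absurd (S1_eq₃ hc1 hc2) h1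

-- S2 equational lemmas
lemma S2_eq₁ {u v x y z : BT k}
    (h : BT.isVV v = true ∧ u = BT.barOp v ∧ x = y ∧ y = z ∧ BT.isVV x = true) :
    BT.S2 u v x y z = x := by
  unfold BT.S2; rw [if_pos h]

lemma isP_isVV {x : BT k} (h : BT.isP x = true) : BT.isVV x = false := by
  cases x <;> simp [BT.isP, BT.isVV] at h ⊢

lemma S2_notc1 {u v x y z : BT k} (hx : BT.isP x = true) :
    ¬(BT.isVV v = true ∧ u = BT.barOp v ∧ x = y ∧ y = z ∧ BT.isVV x = true) := by
  intro h
  rw [isP_isVV hx] at h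
  exact Bool.false_ne_true h.2.2.2.2

lemma S2_eq₂ {u v x y z : BT k}
    (h1 : ¬(BT.isVV v = true ∧ u = BT.barOp v ∧ x = y ∧ y = z ∧ BT.isVV x = true))
    (h2 : BT.isP x = true ∧ BT.isP y = true ∧ BT.isP z = true) :
    BT.S2 u v x y z = BT.disc x y z := by
  unfold BT.S2; rw [if_neg h1, if_pos h2]

lemma S2_eq₃ {u v x y z : BT k}
    (h1 : ¬(BT.isVV v = true ∧ u = BT.barOp v ∧ x = y ∧ y = z ∧ BT.isVV x = true))
    (h2 : ¬(BT.isP x = true ∧ BT.isP y = true ∧ BT.isP z = true)) :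
    BT.S2 u v x y z = BT.zero := by
  unfold BT.S2; rw [if_neg h1, if_neg h2]

lemma S2_Q {u v x y z u' v' x' y' z' : BT k}
    (hu : ZS u' u) (hv : ZS v' v) (hx : ZS x' x) (hy : ZS y' y) (hz : ZS z' z) :
    BT.S2 u' v' x' y' z' = BT.zero ∨ BT.S2 u' v' x' y' z' = BT.S2 u v x y z := by
  by_cases hc1 : BT.isVV v' = true ∧ u' = BT.barOp v' ∧ x' = y' ∧ y' = z' ∧ BT.isVV x' = true
  · right
    obtain ⟨hVVv, hbar, hxy, hyz, hVVx⟩ := hc1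
    have hx0 : x' ≠ BT.zero := isVV_nz hVVx
    have hu0 : u' ≠ BT.zero := by rw [hbar]; exact barOp_nz hVVv
    obtain rfl := hx.resolve_right hx0
    obtain rfl := hy.resolve_right (by rw [← hxy]; exact hx0)
    obtain rfl := hz.resolve_right (by rw [← hyz, ← hxy]; exact hx0)
    obtain rfl := hu.resolve_right hu0
    obtain rfl := hv.resolve_right (isVV_nz hVVv)
    rfl
  · by_cases hc2 : BT.isP x' = true ∧ BT.isP y' = true ∧ BT.isP z' = true
    · right
      obtain ⟨hpx, hpy, hpz⟩ := hc2
      obtain rfl := hx.resolve_right (isP_nz hpx)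
      obtain rfl := hy.resolve_right (isP_nz hpy)
      obtain rfl := hz.resolve_right (isP_nz hpz)
      rw [S2_eq₂ (S2_notc1 hpx) ⟨hpx, hpy, hpz⟩, S2_eq₂ (S2_notc1 hpx) ⟨hpx, hpy, hpz⟩]
    · exact Or.inl (S2_eq₃ hc1 hc2)

lemma S2_nzXYZ {x y z u' v' x' y' z' : BT k}
    (hx : ZS x' x) (hy : ZS y' y) (hz : ZS z' z)
    (h : BT.S2 u' v' x' y' z' ≠ BT.zero) : x' = x ∧ y' = y ∧ z' = z := by
  by_cases hc1 : BT.isVV v' = true ∧ u' = BT.barOp v' ∧ x' = y' ∧ y' = z' ∧ BT.isVV x' = true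
  · obtain ⟨hVVv, hbar, hxy, hyz, hVVx⟩ := hc1
    have hx0 : x' ≠ BT.zero := isVV_nz hVVx
    exact ⟨hx.resolve_right hx0, hy.resolve_right (by rw [← hxy]; exact hx0),
      hz.resolve_right (by rw [← hyz, ← hxy]; exact hx0)⟩
  · by_cases hc2 : BT.isP x' = true ∧ BT.isP y' = true ∧ BT.isP z' = true
    · exact ⟨hx.resolve_right (isP_nz hc2.1), hy.resolve_right (isP_nz hc2.2.1),
        hz.resolve_right (isP_nz hc2.2.2)⟩
    · exact absurd (S2_eq₃ hc1 hc2) h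

lemma S2_R {u v x y z u₁ v₁ x₁ y₁ z₁ u₂ v₂ x₂ y₂ z₂ : BT k}
    (hu₁ : ZS u₁ u) (hv₁ : ZS v₁ v) (hx₁ : ZS x₁ x) (hy₁ : ZS y₁ y) (hz₁ : ZS z₁ z)
    (hu₂ : ZS u₂ u) (hv₂ : ZS v₂ v) (hx₂ : ZS x₂ x) (hy₂ : ZS y₂ y) (hz₂ : ZS z₂ z)
    (h1 : BT.S2 u₁ v₁ x₁ y₁ z₁ ≠ BT.zero) (h2 : BT.S2 u₂ v₂ x₂ y₂ z₂ ≠ BT.zero) :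
    BT.S2 (pp u₁ u₂) (pp v₁ v₂) (pp x₁ x₂) (pp y₁ y₂) (pp z₁ z₂) ≠ BT.zero := by
  obtain ⟨rfl, rfl, rfl⟩ := S2_nzXYZ hx₁ hy₁ hz₁ h1
  obtain ⟨rfl, rfl, rfl⟩ := S2_nzXYZ hx₂ hy₂ hz₂ h2
  rw [pp_self, pp_self, pp_self]
  by_cases hc1 : BT.isVV v₁ = true ∧ u₁ = BT.barOp v₁ ∧ x₂ = y₂ ∧ y₂ = z₂ ∧ BT.isVV x₂ = true
  · have hu0 : u₁ ≠ BT.zero := by rw [hc1.2.1]; exact barOp_nz hc1.1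
    obtain rfl := hu₁.resolve_right hu0
    obtain rfl := hv₁.resolve_right (isVV_nz hc1.1)
    rw [pp_ZS_right hu₂, pp_ZS_right hv₂]
    exact h2
  · by_cases hc2 : BT.isP x₂ = true ∧ BT.isP y₂ = true ∧ BT.isP z₂ = true
    · rw [S2_eq₂ (S2_notc1 hc2.1) hc2]
      exact disc_nz hc2.1 hc2.2.2
    · exact absurd (S2_eq₃ hc1 hc2) h1


-- arity wrappers
lemma good1 (f : BT k → BT k) (hf : ∀ x, f x ≠ BT.zero → x ≠ BT.zero)
    {a b c d : BT k} (h : Good a b c d) : Good (f a) (f b) (f c) (f d) :=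
  closG (ι := Unit) (fun w => f (w ()))
    (fullQ _ (fun y hy _ => hf (y ()) hy))
    (fullR _ (fun y hy _ => hf (y ()) hy))
    (A := fun _ => a) (B := fun _ => b) (C := fun _ => c) (D := fun _ => d)
    (fun _ => h)

lemma good2full (f : BT k → BT k → BT k)
    (hf : ∀ x y, f x y ≠ BT.zero → x ≠ BT.zero ∧ y ≠ BT.zero)
    {a₁ b₁ c₁ d₁ a₂ b₂ c₂ d₂ : BT k}
    (h1 : Good a₁ b₁ c₁ d₁) (h2 : Good a₂ b₂ c₂ d₂) :
    Good (f a₁ a₂) (f b₁ b₂) (f c₁ c₂) (f d₁ d₂) :=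
  closG (ι := Fin 2) (fun w => f (w 0) (w 1))
    (fullQ _ (fun y hy i => by
      obtain ⟨e1, e2⟩ := hf _ _ hy
      fin_cases i
      · exact e1
      · exact e2))
    (fullR _ (fun y hy i => by
      obtain ⟨e1, e2⟩ := hf _ _ hy
      fin_cases i
      · exact e1
      · exact e2))
    (A := ![a₁, a₂]) (B := ![b₁, b₂]) (C := ![c₁, c₂]) (D := ![d₁, d₂])
    (fun i => by fin_cases i <;> assumption)

lemma good3full (f : BT k → BT k → BT k → BT k)
    (hf : ∀ x y z, f x y z ≠ BT.zero → x ≠ BT.zero ∧ y ≠ BT.zero ∧ z ≠ BT.zero)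
    {a₁ b₁ c₁ d₁ a₂ b₂ c₂ d₂ a₃ b₃ c₃ d₃ : BT k}
    (h1 : Good a₁ b₁ c₁ d₁) (h2 : Good a₂ b₂ c₂ d₂) (h3 : Good a₃ b₃ c₃ d₃) :
    Good (f a₁ a₂ a₃) (f b₁ b₂ b₃) (f c₁ c₂ c₃) (f d₁ d₂ d₃) :=
  closG (ι := Fin 3) (fun w => f (w 0) (w 1) (w 2))
    (fullQ _ (fun y hy i => by
      obtain ⟨e1, e2, e3⟩ := hf _ _ _ hy
      fin_cases i
      · exact e1
      · exact e2
      · exact e3))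
    (fullR _ (fun y hy i => by
      obtain ⟨e1, e2, e3⟩ := hf _ _ _ hy
      fin_cases i
      · exact e1
      · exact e2
      · exact e3))
    (A := ![a₁, a₂, a₃]) (B := ![b₁, b₂, b₃]) (C := ![c₁, c₂, c₃]) (D := ![d₁, d₂, d₃])
    (fun i => by fin_cases i <;> assumption)

lemma good4full (f : BT k → BT k → BT k → BT k → BT k)
    (hf : ∀ x y z u, f x y z u ≠ BT.zero →
      x ≠ BT.zero ∧ y ≠ BT.zero ∧ z ≠ BT.zero ∧ u ≠ BT.zero)
    {a₁ b₁ c₁ d₁ a₂ b₂ c₂ d₂ a₃ b₃ c₃ d₃ a₄ b₄ c₄ d₄ : BT k}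
    (h1 : Good a₁ b₁ c₁ d₁) (h2 : Good a₂ b₂ c₂ d₂) (h3 : Good a₃ b₃ c₃ d₃)
    (h4 : Good a₄ b₄ c₄ d₄) :
    Good (f a₁ a₂ a₃ a₄) (f b₁ b₂ b₃ b₄) (f c₁ c₂ c₃ c₄) (f d₁ d₂ d₃ d₄) :=
  closG (ι := Fin 4) (fun w => f (w 0) (w 1) (w 2) (w 3))
    (fullQ _ (fun y hy i => by
      obtain ⟨e1, e2, e3, e4⟩ := hf _ _ _ _ hy
      fin_cases i
      · exact e1
      · exact e2
      · exact e3
      · exact e4))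
    (fullR _ (fun y hy i => by
      obtain ⟨e1, e2, e3, e4⟩ := hf _ _ _ _ hy
      fin_cases i
      · exact e1
      · exact e2
      · exact e3
      · exact e4))
    (A := ![a₁, a₂, a₃, a₄]) (B := ![b₁, b₂, b₃, b₄]) (C := ![c₁, c₂, c₃, c₄])
    (D := ![d₁, d₂, d₃, d₄])
    (fun i => by fin_cases i <;> assumption)

lemma good3J {a₁ b₁ c₁ d₁ a₂ b₂ c₂ d₂ a₃ b₃ c₃ d₃ : BT k}
    (h1 : Good a₁ b₁ c₁ d₁) (h2 : Good a₂ b₂ c₂ d₂) (h3 : Good a₃ b₃ c₃ d₃) :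
    Good (BT.J' a₁ a₂ a₃) (BT.J' b₁ b₂ b₃) (BT.J' c₁ c₂ c₃) (BT.J' d₁ d₂ d₃) :=
  closG (ι := Fin 3) (fun w => BT.J' (w 0) (w 1) (w 2))
    (fun x y h => J'_Q (h 0) (h 1) (h 2))
    (fun x y z hy hz => J'_R (hy 0) (hy 1) (hy 2) (hz 0) (hz 1) (hz 2))
    (A := ![a₁, a₂, a₃]) (B := ![b₁, b₂, b₃]) (C := ![c₁, c₂, c₃]) (D := ![d₁, d₂, d₃])
    (fun i => by fin_cases i <;> assumption)

lemma good4S1 {a₁ b₁ c₁ d₁ a₂ b₂ c₂ d₂ a₃ b₃ c₃ d₃ a₄ b₄ c₄ d₄ : BT k}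
    (h1 : Good a₁ b₁ c₁ d₁) (h2 : Good a₂ b₂ c₂ d₂) (h3 : Good a₃ b₃ c₃ d₃)
    (h4 : Good a₄ b₄ c₄ d₄) :
    Good (BT.S1 a₁ a₂ a₃ a₄) (BT.S1 b₁ b₂ b₃ b₄) (BT.S1 c₁ c₂ c₃ c₄)
      (BT.S1 d₁ d₂ d₃ d₄) :=
  closG (ι := Fin 4) (fun w => BT.S1 (w 0) (w 1) (w 2) (w 3))
    (fun x y h => S1_Q (h 0) (h 1) (h 2) (h 3))
    (fun x y z hy hz => S1_R (hy 0) (hy 1) (hy 2) (hy 3) (hz 0) (hz 1) (hz 2) (hz 3))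
    (A := ![a₁, a₂, a₃, a₄]) (B := ![b₁, b₂, b₃, b₄]) (C := ![c₁, c₂, c₃, c₄])
    (D := ![d₁, d₂, d₃, d₄])
    (fun i => by fin_cases i <;> assumption)

lemma good5S2 {a₁ b₁ c₁ d₁ a₂ b₂ c₂ d₂ a₃ b₃ c₃ d₃ a₄ b₄ c₄ d₄ a₅ b₅ c₅ d₅ : BT k}
    (h1 : Good a₁ b₁ c₁ d₁) (h2 : Good a₂ b₂ c₂ d₂) (h3 : Good a₃ b₃ c₃ d₃)
    (h4 : Good a₄ b₄ c₄ d₄) (h5 : Good a₅ b₅ c₅ d₅) :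
    Good (BT.S2 a₁ a₂ a₃ a₄ a₅) (BT.S2 b₁ b₂ b₃ b₄ b₅) (BT.S2 c₁ c₂ c₃ c₄ c₅)
      (BT.S2 d₁ d₂ d₃ d₄ d₅) :=
  closG (ι := Fin 5) (fun w => BT.S2 (w 0) (w 1) (w 2) (w 3) (w 4))
    (fun x y h => S2_Q (h 0) (h 1) (h 2) (h 3) (h 4))
    (fun x y z hy hz =>
      S2_R (hy 0) (hy 1) (hy 2) (hy 3) (hy 4) (hz 0) (hz 1) (hz 2) (hz 3) (hz 4))
    (A := ![a₁, a₂, a₃, a₄, a₅]) (B := ![b₁, b₂, b₃, b₄, b₅])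
    (C := ![c₁, c₂, c₃, c₄, c₅]) (D := ![d₁, d₂, d₃, d₄, d₅])
    (fun i => by fin_cases i <;> assumption)

theorem polyGood {T : TM k} {n : ℕ} {p : (Fin n → BT k) → BT k} (hp : PolyB T p) :
    ∀ A B C D : Fin n → BT k, (∀ i, Good (A i) (B i) (C i) (D i)) →
      Good (p A) (p B) (p C) (p D) := by
  induction hp with
  | proj i => exact fun A B C D h => h i
  | const c => exact fun A B C D h => good_const c
  | t0 _ ih =>
      exact fun A B C D h => good1 BT.T0 (fun _ => T0_nz) (ih A B C D h)
  | t1 _ _ ihp ihq =>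
      exact fun A B C D h =>
        good2full BT.T1 (fun _ _ => T1_nz) (ihp A B C D h) (ihq A B C D h)
  | meet _ _ ihp ihq =>
      exact fun A B C D h =>
        good2full BT.meet (fun _ _ => meet_nz) (ihp A B C D h) (ihq A B C D h)
  | meetI j _ _ ihp ihq =>
      exact fun A B C D h =>
        good2full (BT.meetI j) (fun _ _ => meetI_nz) (ihp A B C D h) (ihq A B C D h)
  | jop _ _ _ ihp ihq ihr =>
      exact fun A B C D h => good3J (ihp A B C D h) (ihq A B C D h) (ihr A B C D h)
  | s1 _ _ _ _ ihp ihq ihr ihs =>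
      exact fun A B C D h =>
        good4S1 (ihp A B C D h) (ihq A B C D h) (ihr A B C D h) (ihs A B C D h)
  | s2 _ _ _ _ _ ihp ihq ihr ihs ihw =>
      exact fun A B C D h =>
        good5S2 (ihp A B C D h) (ihq A B C D h) (ihr A B C D h) (ihs A B C D h)
          (ihw A B C D h)
  | mach i hi r t b _ _ _ ihp ihq ihu =>
      exact fun A B C D h =>
        good3full (mop T i r t b) (fun _ _ _ => mop_nz)
          (ihp A B C D h) (ihq A B C D h) (ihu A B C D h)
  | u1 i hi r t b _ _ _ _ ihp ihq ihr ihs =>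
      exact fun A B C D h =>
        good4full (U1op (mop T i r t b)) (fun _ _ _ _ => U1_nz (fun _ _ _ => mop_nz))
          (ihp A B C D h) (ihq A B C D h) (ihr A B C D h) (ihs A B C D h)
  | u2 i hi r t b _ _ _ _ ihp ihq ihr ihs =>
      exact fun A B C D h =>
        good4full (U2op (mop T i r t b)) (fun _ _ _ _ => U2_nz (fun _ _ _ => mop_nz))
          (ihp A B C D h) (ihq A B C D h) (ihr A B C D h) (ihs A B C D h)

end NoJoin

/-- B(T) has no join-like binary polynomials on U ∪ V ∪ V̄: there is no
binary polynomial F and u, v ∈ U ∪ V ∪ V̄ with F(0,0) = 0 and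
F(u,0) = F(0,u) = F(u,u) = v. -/
theorem statement7 {k : ℕ} (hk : 0 < k) (T : TM k) :
    ¬ ∃ (F : BT k → BT k → BT k) (u v : BT k), BPolyB T F ∧ BT.isUVV u ∧ BT.isUVV v ∧
      F BT.zero BT.zero = BT.zero ∧ F u BT.zero = v ∧ F BT.zero u = v ∧ F u u = v := by
  rintro ⟨F, u, v, hF, hu, hv, h00, h10, h01, h11⟩
  have hu0 : u ≠ BT.zero := isUVV_nz hu
  have hv0 : v ≠ BT.zero := isUVV_nz hv
  have g0 : Good BT.zero u BT.zero u :=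
    ⟨Or.inl rfl, Or.inr rfl, (pp_zero_right u).symm⟩
  have g1 : Good BT.zero BT.zero u u :=
    ⟨Or.inr rfl, Or.inl rfl, (pp_zero_left u).symm⟩
  have key := polyGood hF ![BT.zero, BT.zero] ![u, BT.zero] ![BT.zero, u] ![u, u]
    (fun i => by
      fin_cases i
      · exact g0
      · exact g1)
  have key' : Good (F BT.zero BT.zero) (F u BT.zero) (F BT.zero u) (F u u) := key
  rw [h00, h10, h01, h11] at key'
  have h3 := key'.2.2
  rw [pp_self] at h3
  exact hv0 h3.symm

end Paper
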